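/- arXiv:1109.1233 — 3 statements merged into one kernel-verified Lean document; each statement's English description precedes it below -/
import Mathlib

section
/- (Depth-first exploration: active vertices lie on a path) In the depth-first exploration of a cluster started at x, let X̃_n be the set of explored vertices a for which some incident edge has not yet been explored or marked unexplored. Then at every step n there is a unique vertex a ∈ X̃_n farthest from x in the current spanning tree T_n, and all other vertices of X̃_n lie on the unique path in T_n from a to the root x. -/
/-- State of the depth-first exploration: explored vertices `X`, tree edges `T`,
explored edges `E`, unexplored (surplus) edges `U`. -/
structure DFSState (V : Type) where
  X : Finset V
  T : Finset (Sym2 V)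
  E : Finset (Sym2 V)
  U : Finset (Sym2 V)

/-- The current spanning tree, as a graph. -/
def DFSState.tree {V : Type} (σ : DFSState V) : SimpleGraph V :=
  SimpleGraph.fromEdgeSet (↑σ.T)

/-- Active vertices: explored vertices with some incident edge of `G` neither
explored nor marked unexplored. -/
def DFSState.active {V : Type} [DecidableEq V] (G : SimpleGraph V) (σ : DFSState V) : Set V :=
  {a | a ∈ σ.X ∧ ∃ b, G.Adj a b ∧ s(a, b) ∉ σ.E ∪ σ.U}

/-- One step of the depth-first exploration of `G` with configuration `ω`, rooted at
`x`: select an edge `{a,b}` not in `W = E ∪ U` at an active vertex `a` farthest from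
`x` in the tree; if `b` is unexplored check its occupancy (adding it to the tree if
open), otherwise mark the edge as unexplored (surplus). -/
def DFSStep {V : Type} [DecidableEq V] (G : SimpleGraph V) (ω : Sym2 V → Bool) (x : V)
    (σ σ' : DFSState V) : Prop :=
  ∃ a b, G.Adj a b ∧ a ∈ σ.X ∧ s(a, b) ∉ σ.E ∪ σ.U ∧
    (∀ a' ∈ σ.active G, σ.tree.dist x a' ≤ σ.tree.dist x a) ∧
    ((b ∈ σ.X ∧ σ' = ⟨σ.X, σ.T, σ.E, insert s(a, b) σ.U⟩) ∨
     (b ∉ σ.X ∧ ω s(a, b) = true ∧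
        σ' = ⟨insert b σ.X, insert s(a, b) σ.T, insert s(a, b) σ.E, σ.U⟩) ∨
     (b ∉ σ.X ∧ ω s(a, b) = false ∧ σ' = ⟨σ.X, σ.T, insert s(a, b) σ.E, σ.U⟩))

/-- Reachability from the initial state of the exploration rooted at `x`. -/
def DFSReachable {V : Type} [DecidableEq V] (G : SimpleGraph V) (ω : Sym2 V → Bool)
    (x : V) (σ : DFSState V) : Prop :=
  Relation.ReflTransGen (DFSStep G ω x) ⟨{x}, ∅, ∅, ∅⟩ σ

/-!
All active vertices lie on one path of the exploration tree ending at the root, and the tree is a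
forest that only touches explored vertices. In a forest the distance to the root strictly
decreases along such a path, so its first active vertex is the unique farthest one, which is the
vertex the exploration selects. Checking an edge there either only shrinks the active set, or
attaches a new vertex `b` as a leaf; prepending `b` to the path from the selected vertex restores
the invariant.
-/

open SimpleGraph

namespace SimpleGraph

variable {V : Type} {G : SimpleGraph V}

theorem IsAcyclic.length_eq_dist (hG : G.IsAcyclic) {u v : V} {p : G.Walk u v}
    (hp : p.IsPath) : p.length = G.dist u v := by
  obtain ⟨q, hq, hlen⟩ := Reachable.exists_path_of_dist ⟨p⟩
  obtain rfl : p = q := congrArg Subtype.val ((hG.subsingleton_path u v).elim ⟨p, hp⟩ ⟨q, hq⟩)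
  exact hlen

theorem IsAcyclic.dist_lt_of_mem_support [DecidableEq V] (hG : G.IsAcyclic) {u v c : V}
    {p : G.Walk u v} (hp : p.IsPath) (hc : c ∈ p.support) (hcu : c ≠ u) :
    G.dist v c < G.dist v u := by
  have hsplit := congrArg Walk.length (p.take_spec hc)
  have htake : (p.takeUntil c hc).length ≠ 0 := fun h ↦ hcu (Walk.eq_of_length_eq_zero h).symm
  rw [Walk.length_append] at hsplit
  rw [dist_comm, G.dist_comm (u := v), ← hG.length_eq_dist hp,
    ← hG.length_eq_dist (hp.dropUntil hc)]
  omega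

theorem Walk.IsPath.exists_start_mem_of_forall_mem_support {S : Set V} (hS : S.Nonempty)
    {u v : V} {p : G.Walk u v} (hp : p.IsPath) (hSp : ∀ c ∈ S, c ∈ p.support) :
    ∃ w ∈ S, ∃ q : G.Walk w v, q.IsPath ∧ ∀ c ∈ S, c ∈ q.support := by
  induction p with
  | nil =>
    obtain ⟨w, hw⟩ := hS
    obtain rfl : w = _ := by simpa using hSp w hw
    exact ⟨w, hw, .nil, hp, hSp⟩
  | @cons u _ _ h p ih =>
    by_cases hu : u ∈ S
    · exact ⟨u, hu, .cons h p, hp, hSp⟩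
    · refine ih hp.of_cons fun c hc ↦ ?_
      rcases List.mem_cons.mp (hSp c hc) with rfl | hcp
      · exact absurd hc hu
      · exact hcp

theorem IsAcyclic.exists_farthest_of_forall_mem_support [DecidableEq V] (hG : G.IsAcyclic)
    {S : Set V} (hS : S.Nonempty) {u v : V} {p : G.Walk u v} (hp : p.IsPath)
    (hSp : ∀ c ∈ S, c ∈ p.support) :
    ∃ a ∈ S, (∀ a' ∈ S, G.dist v a' ≤ G.dist v a) ∧
      (∀ a' ∈ S, G.dist v a' = G.dist v a → a' = a) ∧
      ∃ q : G.Walk a v, q.IsPath ∧ ∀ a' ∈ S, a' ∈ q.support := by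
  obtain ⟨a, ha, q, hq, hSq⟩ := hp.exists_start_mem_of_forall_mem_support hS hSp
  have hlt : ∀ a' ∈ S, a' ≠ a → G.dist v a' < G.dist v a :=
    fun a' ha' hne ↦ hG.dist_lt_of_mem_support hq (hSq a' ha') hne
  refine ⟨a, ha, fun a' ha' ↦ ?_, fun a' ha' heq ↦ ?_, q, hq, hSq⟩
  · by_cases hne : a' = a
    · rw [hne]
    · exact (hlt a' ha' hne).le
  · by_contra hne
    exact (hlt a' ha' hne).ne heq

theorem not_reachable_of_forall_adj_mem {X : Set V} (hX : ∀ u w, G.Adj u w → u ∈ X)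
    {a b : V} (hb : b ∉ X) (hab : a ≠ b) : ¬G.Reachable a b := by
  rintro ⟨p⟩
  cases p.reverse with
  | nil => exact hab rfl
  | cons h _ => exact hb (hX _ _ h)

end SimpleGraph

structure DFSInvariant {V : Type} [DecidableEq V] (G : SimpleGraph V) (x : V)
    (σ : DFSState V) : Prop where
  mem_of_tree_adj : ∀ u w, σ.tree.Adj u w → u ∈ σ.X
  isAcyclic : σ.tree.IsAcyclic
  active_on_path : ∃ u, ∃ p : σ.tree.Walk u x, p.IsPath ∧ ∀ c ∈ σ.active G, c ∈ p.support

namespace DFSInvariant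

variable {V : Type} [DecidableEq V] {G : SimpleGraph V} {ω : Sym2 V → Bool} {x : V}

theorem init : DFSInvariant G x ⟨{x}, ∅, ∅, ∅⟩ := by
  have htree : (⟨{x}, ∅, ∅, ∅⟩ : DFSState V).tree = ⊥ := by simp [DFSState.tree]
  refine ⟨?_, ?_, x, ?_⟩ <;> rw [htree]
  · simp
  · exact isAcyclic_bot
  · exact ⟨.nil, .nil, fun c hc ↦ by simpa using hc.1⟩

theorem mono {σ σ' : DFSState V} (hinv : DFSInvariant G x σ) (hX : σ'.X = σ.X)
    (hT : σ'.T = σ.T) (hW : σ.E ∪ σ.U ⊆ σ'.E ∪ σ'.U) : DFSInvariant G x σ' := by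
  obtain ⟨X, T, E, U⟩ := σ'
  subst hX hT
  obtain ⟨u, p, hp, hcov⟩ := hinv.active_on_path
  exact ⟨hinv.mem_of_tree_adj, hinv.isAcyclic, u, p, hp,
    fun c ⟨hc, d, hd, hdW⟩ ↦ hcov c ⟨hc, d, hd, fun h ↦ hdW (hW h)⟩⟩

theorem exists_isPath_of_farthest {σ : DFSState V} (hinv : DFSInvariant G x σ) {a : V}
    (ha : a ∈ σ.active G) (hfar : ∀ a' ∈ σ.active G, σ.tree.dist x a' ≤ σ.tree.dist x a) :
    ∃ q : σ.tree.Walk a x, q.IsPath ∧ ∀ c ∈ σ.active G, c ∈ q.support := by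
  obtain ⟨u, p, hp, hcov⟩ := hinv.active_on_path
  obtain ⟨a₀, ha₀, hmax, huniq, hpath⟩ :=
    hinv.isAcyclic.exists_farthest_of_forall_mem_support ⟨a, ha⟩ hp hcov
  obtain rfl : a = a₀ := huniq a ha (le_antisymm (hmax a ha) (hfar a₀ ha₀))
  exact hpath

theorem add_tree_edge {σ : DFSState V} (hinv : DFSInvariant G x σ) {a b : V} (haX : a ∈ σ.X)
    (hbX : b ∉ σ.X) {q : σ.tree.Walk a x} (hq : q.IsPath)
    (hqcov : ∀ c ∈ σ.active G, c ∈ q.support) :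
    DFSInvariant G x ⟨insert b σ.X, insert s(a, b) σ.T, insert s(a, b) σ.E, σ.U⟩ := by
  have hab : a ≠ b := fun h ↦ hbX (h ▸ haX)
  have hnr : ¬σ.tree.Reachable a b :=
    not_reachable_of_forall_adj_mem (X := ↑σ.X) hinv.mem_of_tree_adj hbX hab
  have htree : (⟨insert b σ.X, insert s(a, b) σ.T, insert s(a, b) σ.E, σ.U⟩ :
      DFSState V).tree = σ.tree ⊔ edge a b := by
    simp only [DFSState.tree, edge, Finset.coe_insert, Set.insert_eq, fromEdgeSet_union, sup_comm]
  have hba : (σ.tree ⊔ edge a b).Adj b a := Or.inr (by simp [edge_adj, hab.symm])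
  have hbq : b ∉ (q.mapLe (le_sup_left (b := edge a b))).support := by
    rw [Walk.support_mapLe_eq_support]
    exact fun hb ↦ hnr ⟨q.takeUntil b hb⟩
  refine ⟨?_, ?_, b, ?_⟩ <;> rw [htree]
  · rintro u w (h | h)
    · exact Finset.mem_insert_of_mem (hinv.mem_of_tree_adj u w h)
    · rcases ((edge_adj a b u w).mp h).1 with ⟨rfl, -⟩ | ⟨rfl, -⟩
      exacts [Finset.mem_insert_of_mem haX, Finset.mem_insert_self _ _]
  · exact hinv.isAcyclic.sup_edge_of_not_reachable hnr
  · refine ⟨.cons hba (q.mapLe le_sup_left), (hq.mapLe _).cons hbq, ?_⟩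
    rintro c ⟨hc, d, hd, hdW⟩
    rw [Walk.support_cons, Walk.support_mapLe_eq_support, List.mem_cons]
    rcases Finset.mem_insert.mp hc with rfl | hc
    · exact .inl rfl
    · refine .inr (hqcov c ⟨hc, d, hd, fun h ↦ hdW ?_⟩)
      exact Finset.union_subset_union (Finset.subset_insert _ _) subset_rfl h

theorem step {σ σ' : DFSState V} (hinv : DFSInvariant G x σ) (hstep : DFSStep G ω x σ σ') :
    DFSInvariant G x σ' := by
  obtain ⟨a, b, hadj, haX, hnW, hfar, hcase⟩ := hstep
  rcases hcase with ⟨-, rfl⟩ | ⟨hbX, -, rfl⟩ | ⟨-, -, rfl⟩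
  · exact hinv.mono rfl rfl (Finset.union_subset_union subset_rfl (Finset.subset_insert _ _))
  · obtain ⟨q, hq, hqcov⟩ := hinv.exists_isPath_of_farthest ⟨haX, b, hadj, hnW⟩ hfar
    exact hinv.add_tree_edge haX hbX hq hqcov
  · exact hinv.mono rfl rfl (Finset.union_subset_union (Finset.subset_insert _ _) subset_rfl)

theorem of_reachable {σ : DFSState V} (h : DFSReachable G ω x σ) : DFSInvariant G x σ := by
  induction h with
  | refl => exact init
  | tail _ hstep ih => exact ih.step hstep

end DFSInvariant

theorem stmt8_general {V : Type} [DecidableEq V]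
    (G : SimpleGraph V) (ω : Sym2 V → Bool) (x : V) (σ : DFSState V)
    (hσ : DFSReachable G ω x σ) (hne : (σ.active G).Nonempty) :
    ∃ a ∈ σ.active G,
      (∀ a' ∈ σ.active G, σ.tree.dist x a' ≤ σ.tree.dist x a) ∧
      (∀ a' ∈ σ.active G, σ.tree.dist x a' = σ.tree.dist x a → a' = a) ∧
      ∃ p : σ.tree.Walk a x, p.IsPath ∧ ∀ a' ∈ σ.active G, a' ∈ p.support := by
  have hinv := DFSInvariant.of_reachable hσ
  obtain ⟨u, p, hp, hcov⟩ := hinv.active_on_path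
  exact hinv.isAcyclic.exists_farthest_of_forall_mem_support hne hp hcov

theorem stmt8 {V : Type} [Fintype V] [DecidableEq V]
    (G : SimpleGraph V) (ω : Sym2 V → Bool) (x : V) (σ : DFSState V)
    (hσ : DFSReachable G ω x σ) (hne : (σ.active G).Nonempty) :
    ∃ a ∈ σ.active G,
      (∀ a' ∈ σ.active G, σ.tree.dist x a' ≤ σ.tree.dist x a) ∧
      (∀ a' ∈ σ.active G, σ.tree.dist x a' = σ.tree.dist x a → a' = a) ∧
      ∃ p : σ.tree.Walk a x, p.IsPath ∧ ∀ a' ∈ σ.active G, a' ∈ p.support :=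
  stmt8_general G ω x σ hσ hne
end

section
/- (Path extension with disjoint boxes) Let d ≥ 1, k ≥ 1, A > 0, and suppose x ∈ ℤ^d with |x|_∞ > nA√k for some integer n ≥ 1. If 0 is connected to x in ℤ^d by an open path of length at most k, then there exist x_0 = 0, x_1, …, x_{n-1} with x_i ∈ ∂Q_{A√k}(x_{i-1}) for each i, such that the events {x_{i-1} is connected to x_i by an open path of length ≤ k inside Q_{A√k}(x_{i-1})} for i = 1,…,n−1, and {x_{n-1} ↔ x}, all occur disjointly (i.e., their disjoint occurrence holds). -/
/-! A shortest open path from `0` to `x` visits no vertex twice, so pieces of it over disjoint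
time intervals use disjoint edges. Cut it greedily: from `x_{i-1}`, follow the path until the
step before it first leaves `Q_r(x_{i-1})`, `r = ⌊A√k⌋`. Nearest-neighbour steps change the
sup-distance by at most one, so the stopping point lies exactly on `∂Q_r(x_{i-1})`; and since
`|x_i|_∞ ≤ i r < n r < |x|_∞`, the path has not yet reached `x` when each of the first
`n - 1` boxes is left. -/

/-- Nearest-neighbor adjacency on `ℤ^d`. -/
def latAdj (d : ℕ) (x y : Fin d → ℤ) : Prop :=
  ∃ i, (y i = x i + 1 ∨ y i = x i - 1) ∧ ∀ j, j ≠ i → y j = x j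

section Walks

variable {α : Type*} (R : α → α → Prop)

def IsWalk (f : ℕ → α) (m : ℕ) : Prop :=
  ∀ i < m, R (f i) (f (i + 1))

variable {R}

theorem IsWalk.exists_shortcut {f : ℕ → α} {M a b : ℕ} (hf : IsWalk R f M) (hab : a < b)
    (hbM : b ≤ M) (heq : f a = f b) :
    ∃ g : ℕ → α, g 0 = f 0 ∧ g (M - (b - a)) = f M ∧ IsWalk R g (M - (b - a)) := by
  refine ⟨fun j => if j < a then f j else f (j + (b - a)), ?_, ?_, fun i hi => ?_⟩
  · rcases Nat.eq_zero_or_pos a with rfl | ha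
    · simp [← heq]
    · simp [ha]
  · simp only [show ¬M - (b - a) < a by omega, if_false, show M - (b - a) + (b - a) = M by omega]
  · rcases lt_trichotomy (i + 1) a with h | h | h
    · simpa only [if_pos h, if_pos (show i < a by omega)] using hf i (by omega)
    · simp only [if_pos (show i < a by omega), h, lt_irrefl, if_false,
        show a + (b - a) = b by omega, ← heq]
      simpa only [h] using hf i (by omega)
    · simp only [show ¬i < a by omega, show ¬i + 1 < a by omega, if_false,
        show i + 1 + (b - a) = i + (b - a) + 1 by omega]
      exact hf _ (by omega)

/-- Loop erasure: a shortest walk between two points has no repeated vertex. -/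
theorem IsWalk.exists_injOn {f : ℕ → α} {M : ℕ} (hf : IsWalk R f M) :
    ∃ (g : ℕ → α) (L : ℕ), L ≤ M ∧ g 0 = f 0 ∧ g L = f M ∧ IsWalk R g L ∧
      Set.InjOn g (Set.Iic L) := by
  classical
  have hex : ∃ L, ∃ g : ℕ → α, g 0 = f 0 ∧ g L = f M ∧ IsWalk R g L := ⟨M, f, rfl, rfl, hf⟩
  obtain ⟨g, hg0, hgL, hg⟩ := Nat.find_spec hex
  refine ⟨g, Nat.find hex, Nat.find_le ⟨f, rfl, rfl, hf⟩, hg0, hgL, hg, ?_⟩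
  intro a ha b hb hab
  by_contra hne
  wlog hlt : a < b generalizing a b
  · exact this hb ha hab.symm (Ne.symm hne) (by omega)
  obtain ⟨g', h0, hL, hw⟩ := hg.exists_shortcut hlt hb hab
  have hshorter : Nat.find hex - (b - a) < Nat.find hex := by
    simp only [Set.mem_Iic] at hb; omega
  exact Nat.find_min hex hshorter ⟨g', h0.trans hg0, hL.trans hgL, hw⟩

end Walks

theorem edge_ne_of_injOn {α : Type*} {f : ℕ → α} {M a b : ℕ} (hf : Set.InjOn f (Set.Iic M))
    (ha : a < M) (hb : b < M) (hab : a ≠ b) : s(f a, f (a + 1)) ≠ s(f b, f (b + 1)) := by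
  have inj : ∀ {p q}, p ≤ M → q ≤ M → f p = f q → p = q := fun hp hq h => hf hp hq h
  rw [Ne, Sym2.eq_iff, not_or]
  exact ⟨fun h => hab (inj ha.le hb.le h.1),
    fun h => by have := inj ha.le hb h.1; have := inj ha hb.le h.2; omega⟩

theorem Nat.exists_eq_and_forall_le_of_le_add_one {φ : ℕ → ℕ} {r M : ℕ} (h0 : φ 0 ≤ r)
    (hstep : ∀ u < M, φ (u + 1) ≤ φ u + 1) (hM : r < φ M) :
    ∃ s < M, φ s = r ∧ ∀ u ≤ s, φ u ≤ r := by
  have hM0 : M ≠ 0 := by rintro rfl; omega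
  have hM1 : r < φ (M - 1 + 1) := by rwa [Nat.sub_add_cancel (Nat.pos_of_ne_zero hM0)]
  have hex : ∃ s, r < φ (s + 1) := ⟨M - 1, hM1⟩
  have hlt : Nat.find hex < M := (Nat.find_le (h := hex) hM1).trans_lt (Nat.sub_one_lt hM0)
  have hbelow : ∀ u ≤ Nat.find hex, φ u ≤ r := by
    rintro (_ | v) hv
    · exact h0
    · exact not_lt.1 (Nat.find_min hex (by omega))
  have := Nat.find_spec hex
  have := hstep _ hlt
  exact ⟨Nat.find hex, hlt, le_antisymm (hbelow _ le_rfl) (by omega), hbelow⟩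

section SupNorm

variable {ι : Type*} [Fintype ι]

def natSupNorm (z : ι → ℤ) : ℕ :=
  Finset.univ.sup fun i => (z i).natAbs

theorem norm_eq_natSupNorm (z : ι → ℤ) : ‖z‖ = natSupNorm z := by
  rw [Pi.norm_def, natSupNorm, ← NNReal.coe_natCast, Nat.cast_finsetSup]
  simp only [NNReal.natCast_natAbs]

theorem natAbs_le_natSupNorm (z : ι → ℤ) (i : ι) : (z i).natAbs ≤ natSupNorm z :=
  Finset.le_sup (f := fun i => (z i).natAbs) (Finset.mem_univ i)

@[simp]
theorem natSupNorm_zero : natSupNorm (0 : ι → ℤ) = 0 := by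
  simp [natSupNorm]

theorem natSupNorm_add_le (u v : ι → ℤ) : natSupNorm (u + v) ≤ natSupNorm u + natSupNorm v :=
  Finset.sup_le fun i _ => by
    have := natAbs_le_natSupNorm u i
    have := natAbs_le_natSupNorm v i
    have := Int.natAbs_add_le (u i) (v i)
    simp only [Pi.add_apply]
    omega

theorem natSupNorm_sub_le_add (u v w : ι → ℤ) :
    natSupNorm (u - w) ≤ natSupNorm (u - v) + natSupNorm (v - w) := by
  simpa using natSupNorm_add_le (u - v) (v - w)

end SupNorm

theorem natSupNorm_sub_le_one_of_latAdj {d : ℕ} {a b : Fin d → ℤ} (h : latAdj d a b) :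
    natSupNorm (b - a) ≤ 1 := by
  obtain ⟨i₀, hi₀, hother⟩ := h
  refine Finset.sup_le fun i _ => ?_
  simp only [Pi.sub_apply]
  by_cases hi : i = i₀
  · subst hi; omega
  · rw [hother i hi]; simp

section ExitTimes

variable {ι : Type*} [Fintype ι] {f : ℕ → ι → ℤ} {M r : ℕ}

theorem exists_exit_point (hstep : ∀ u < M, natSupNorm (f (u + 1) - f u) ≤ 1) {c : ℕ}
    (hc : c ≤ M) (hr : r < natSupNorm (f M - f c)) :
    ∃ s, c ≤ s ∧ s < M ∧ natSupNorm (f s - f c) = r ∧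
      ∀ u, c ≤ u → u ≤ s → natSupNorm (f u - f c) ≤ r := by
  have hφ : ∀ v < M - c, natSupNorm (f (c + (v + 1)) - f c) ≤ natSupNorm (f (c + v) - f c) + 1 :=
    fun v hv => by
      have := natSupNorm_sub_le_add (f (c + v + 1)) (f (c + v)) (f c)
      have := hstep (c + v) (by omega)
      rw [← add_assoc]; omega
  obtain ⟨s, hs, hsr, hbelow⟩ := Nat.exists_eq_and_forall_le_of_le_add_one
    (φ := fun v => natSupNorm (f (c + v) - f c)) (by simp) hφ (by rwa [Nat.add_sub_cancel' hc])
  refine ⟨c + s, by omega, by omega, hsr, fun u hcu hus => ?_⟩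
  simpa only [Nat.add_sub_cancel' hcu] using hbelow (u - c) (by omega)

/-- The exit times `τ 1 ≤ … ≤ τ N` of successive boxes of radius `r`, completed by `τ (N+1) = M`. -/
theorem exists_exit_times (hstep : ∀ u < M, natSupNorm (f (u + 1) - f u) ≤ 1) {N : ℕ}
    (hN : N * r < natSupNorm (f M - f 0)) :
    ∃ τ : ℕ → ℕ, τ 0 = 0 ∧ Monotone τ ∧ τ (N + 1) = M ∧ ∀ i < N,
      natSupNorm (f (τ (i + 1)) - f (τ i)) = r ∧
      ∀ u, τ i ≤ u → u ≤ τ (i + 1) → natSupNorm (f u - f (τ i)) ≤ r := by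
  have hexit : ∀ c, ∃ s, c ≤ s ∧ (c ≤ M → r < natSupNorm (f M - f c) →
      s ≤ M ∧ natSupNorm (f s - f c) = r ∧ ∀ u, c ≤ u → u ≤ s → natSupNorm (f u - f c) ≤ r) := by
    intro c
    by_cases h : c ≤ M ∧ r < natSupNorm (f M - f c)
    · obtain ⟨s, hcs, hsM, hs⟩ := exists_exit_point hstep h.1 h.2
      exact ⟨s, hcs, fun _ _ => ⟨hsM.le, hs⟩⟩
    · exact ⟨c, le_rfl, fun h₁ h₂ => (h ⟨h₁, h₂⟩).elim⟩
  choose e hce he using hexit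
  set t : ℕ → ℕ := fun i => e^[i] 0
  have ht_succ : ∀ i, t (i + 1) = e (t i) := fun i => Function.iterate_succ_apply' e i 0
  have hfar : ∀ i < N, natSupNorm (f (t i) - f 0) ≤ i * r → r < natSupNorm (f M - f (t i)) :=
    fun i hi hir => by
      have := natSupNorm_sub_le_add (f M) (f (t i)) (f 0)
      have := Nat.mul_le_mul_right r (show i + 1 ≤ N by omega)
      rw [Nat.succ_mul] at this; omega
  have hinv : ∀ i ≤ N, t i ≤ M ∧ natSupNorm (f (t i) - f 0) ≤ i * r := by
    intro i
    induction i with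
    | zero => simp [t]
    | succ i ih =>
      intro hi
      obtain ⟨hiM, hir⟩ := ih (by omega)
      obtain ⟨hsM, hsr, -⟩ := he _ hiM (hfar i (by omega) hir)
      have := natSupNorm_sub_le_add (f (e (t i))) (f (t i)) (f 0)
      rw [ht_succ, Nat.succ_mul]; omega
  refine ⟨fun i => if i ≤ N then t i else M, by simp [t], monotone_nat_of_le_succ fun i => ?_,
    by simp, fun i hi => ?_⟩
  · split_ifs with h₁ h₂ h₂
    · rw [ht_succ]; exact hce _
    · exact (hinv i h₁).1
    · omega
    · exact le_rfl
  · simp only [if_pos hi.le, if_pos (show i + 1 ≤ N from hi), ht_succ]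
    exact (he _ (hinv i hi.le).1 (hfar i hi (hinv i hi.le).2)).2

end ExitTimes

theorem segment_edges_ne {α : Type*} {f : ℕ → α} {M N : ℕ} {τ : ℕ → ℕ}
    (hf : Set.InjOn f (Set.Iic M)) (hτ : Monotone τ) (hτM : τ (N + 1) = M) {i i' j j' : ℕ}
    (hi : i ≤ N) (hi' : i' ≤ N) (hne : i ≠ i') (hj : j < τ (i + 1) - τ i)
    (hj' : j' < τ (i' + 1) - τ i') :
    s(f (τ i + j), f (τ i + j + 1)) ≠ s(f (τ i' + j'), f (τ i' + j' + 1)) := by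
  have := hτM ▸ hτ (show i + 1 ≤ N + 1 by omega)
  have := hτM ▸ hτ (show i' + 1 ≤ N + 1 by omega)
  refine edge_ne_of_injOn hf (by omega) (by omega) ?_
  rcases hne.lt_or_gt with h | h
  · have := hτ (show i + 1 ≤ i' from h); omega
  · have := hτ (show i' + 1 ≤ i from h); omega

theorem stmt16_general (d k n : ℕ) (A : ℝ) (hA : 0 < A)
    (op : Sym2 (Fin d → ℤ) → Bool) (x : Fin d → ℤ)
    (hx : (n : ℝ) * A * Real.sqrt k < ‖x‖)
    (hconn : ∃ (f : ℕ → Fin d → ℤ) (m : ℕ), m ≤ k ∧ f 0 = 0 ∧ f m = x ∧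
      ∀ i < m, latAdj d (f i) (f (i + 1)) ∧ op s(f i, f (i + 1)) = true) :
    ∃ (y : ℕ → Fin d → ℤ) (g : ℕ → ℕ → Fin d → ℤ) (m : ℕ → ℕ),
      y 0 = 0 ∧
      (∀ i < n - 1, ‖y (i + 1) - y i‖ = ((⌊A * Real.sqrt k⌋ : ℤ) : ℝ)) ∧
      (∀ i < n - 1, m i ≤ k ∧ g i 0 = y i ∧ g i (m i) = y (i + 1) ∧
        (∀ j ≤ m i, ‖g i j - y i‖ ≤ A * Real.sqrt k) ∧
        ∀ j < m i, latAdj d (g i j) (g i (j + 1)) ∧ op s(g i j, g i (j + 1)) = true) ∧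
      (g (n - 1) 0 = y (n - 1) ∧ g (n - 1) (m (n - 1)) = x ∧
        ∀ j < m (n - 1), latAdj d (g (n - 1) j) (g (n - 1) (j + 1)) ∧
          op s(g (n - 1) j, g (n - 1) (j + 1)) = true) ∧
      (∀ i ≤ n - 1, ∀ i' ≤ n - 1, i ≠ i' → ∀ j < m i, ∀ j' < m i',
        s(g i j, g i (j + 1)) ≠ s(g i' j', g i' (j' + 1))) := by
  obtain ⟨f₀, M₀, hM₀k, hf₀0, hf₀M, hwalk₀⟩ := hconn
  obtain ⟨f, M, hMM₀, hf0, hfM, hwalk, hinj⟩ :=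
    IsWalk.exists_injOn (R := fun a b => latAdj d a b ∧ op s(a, b) = true) hwalk₀
  rw [hf₀0] at hf0
  rw [hf₀M] at hfM
  set r := ⌊A * Real.sqrt k⌋₊
  have hAk : 0 ≤ A * Real.sqrt k := by positivity
  have hrA : (r : ℝ) ≤ A * Real.sqrt k := Nat.floor_le hAk
  have hfar : (n - 1) * r < natSupNorm (f M - f 0) := by
    have : ((n * r : ℕ) : ℝ) < natSupNorm x := by
      rw [← norm_eq_natSupNorm, Nat.cast_mul]
      rw [mul_assoc] at hx
      exact lt_of_le_of_lt (by gcongr) hx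
    rw [hfM, hf0, sub_zero]
    exact lt_of_le_of_lt (Nat.mul_le_mul_right r (Nat.sub_le n 1)) (by exact_mod_cast this)
  obtain ⟨τ, hτ0, hτ, hτM, hτr⟩ :=
    exists_exit_times (fun u hu => natSupNorm_sub_le_one_of_latAdj (hwalk u hu).1) hfar
  have hτle : ∀ i ≤ n - 1, τ i ≤ τ (i + 1) ∧ τ (i + 1) ≤ M :=
    fun i hi => ⟨hτ (by omega), hτM ▸ hτ (by omega)⟩
  refine ⟨fun i => f (τ i), fun i j => f (τ i + j), fun i => τ (i + 1) - τ i, ?_⟩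
  beta_reduce
  refine ⟨by rw [hτ0, hf0], fun i hi => ?_,
    fun i hi => ⟨?_, rfl, ?_, fun j hj => ?_, fun j hj => hwalk _ ?_⟩,
    ⟨rfl, ?_, fun j hj => hwalk _ ?_⟩,
    fun i hi i' hi' hne j hj j' hj' => segment_edges_ne hinj hτ hτM hi hi' hne hj hj'⟩
  · rw [norm_eq_natSupNorm, (hτr i hi).1, natCast_floor_eq_intCast_floor hAk]
  · have := hτle i hi.le; omega
  · rw [Nat.add_sub_cancel' (hτle i hi.le).1]
  · have := hτle i hi.le
    rw [norm_eq_natSupNorm]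
    exact le_trans (by exact_mod_cast (hτr i hi).2 _ (by omega) (by omega)) hrA
  · have := hτle i hi.le; omega
  · rw [Nat.add_sub_cancel' (hτle (n - 1) le_rfl).1, hτM, hfM]
  · have := hτle (n - 1) le_rfl; omega

theorem stmt16 (d k n : ℕ) (hk : 1 ≤ k) (hn : 1 ≤ n) (A : ℝ) (hA : 0 < A)
    (op : Sym2 (Fin d → ℤ) → Bool) (x : Fin d → ℤ)
    (hx : (n : ℝ) * A * Real.sqrt k < ‖x‖)
    (hconn : ∃ (f : ℕ → Fin d → ℤ) (m : ℕ), m ≤ k ∧ f 0 = 0 ∧ f m = x ∧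
      ∀ i < m, latAdj d (f i) (f (i + 1)) ∧ op s(f i, f (i + 1)) = true) :
    ∃ (y : ℕ → Fin d → ℤ) (g : ℕ → ℕ → Fin d → ℤ) (m : ℕ → ℕ),
      y 0 = 0 ∧
      (∀ i < n - 1, ‖y (i + 1) - y i‖ = ((⌊A * Real.sqrt k⌋ : ℤ) : ℝ)) ∧
      (∀ i < n - 1, m i ≤ k ∧ g i 0 = y i ∧ g i (m i) = y (i + 1) ∧
        (∀ j ≤ m i, ‖g i j - y i‖ ≤ A * Real.sqrt k) ∧
        ∀ j < m i, latAdj d (g i j) (g i (j + 1)) ∧ op s(g i j, g i (j + 1)) = true) ∧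
      (g (n - 1) 0 = y (n - 1) ∧ g (n - 1) (m (n - 1)) = x ∧
        ∀ j < m (n - 1), latAdj d (g (n - 1) j) (g (n - 1) (j + 1)) ∧
          op s(g (n - 1) j, g (n - 1) (j + 1)) = true) ∧
      (∀ i ≤ n - 1, ∀ i' ≤ n - 1, i ≠ i' → ∀ j < m i, ∀ j' < m i',
        s(g i j, g i (j + 1)) ≠ s(g i' j', g i' (j' + 1))) :=
  stmt16_general d k n A hA op x hx hconn
end

section
/- (Pivotal pair uniqueness) Fix n ≥ 1 and a percolation configuration on ℤ^d. For each x, say a pair (x,y) is admissible if y ∈ ∂Q_n, the edge {y, ỹ} (where ỹ is the designated neighbor of y outside Q_n) is pivotal for the event {0 ↔ x}, and 0 ↔ y in Q_n, y ↔ x. Then for every vertex x there is at most one y ∈ ∂Q_n such that (x,y) is admissible. -/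
set_option maxHeartbeats 1000000


/-- `a` is connected to `b` by an open path staying in `S`. -/
def connIn {V : Type*} (Adj : V → V → Prop) (op : Sym2 V → Bool) (S : Set V)
    (a b : V) : Prop :=
  ∃ (f : ℕ → V) (m : ℕ), f 0 = a ∧ f m = b ∧ (∀ i ≤ m, f i ∈ S) ∧
    ∀ i < m, Adj (f i) (f (i + 1)) ∧ op s(f i, f (i + 1)) = true

/-- `(x,y)` is an admissible pair for the box `Q_n` in configuration `op`,
with designated outside neighbor `tild y` of boundary vertices. -/
def admissiblePair (d n : ℕ) (op : Sym2 (Fin d → ℤ) → Bool)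
    (tild : (Fin d → ℤ) → Fin d → ℤ) (x y : Fin d → ℤ) : Prop :=
  ‖y‖ = (n : ℝ) ∧
  connIn (latAdj d) (Function.update op s(y, tild y) true) Set.univ 0 x ∧
  ¬ connIn (latAdj d) (Function.update op s(y, tild y) false) Set.univ 0 x ∧
  connIn (latAdj d) op {z | ‖z‖ ≤ (n : ℝ)} 0 y ∧
  connIn (latAdj d) op Set.univ y x

namespace Stmt18Aux

variable {V : Type*} {Adj : V → V → Prop} {op op' : Sym2 V → Bool} {S T : Set V} {a b c x : V}

lemma connIn_mono_op (h : ∀ s, op s = true → op' s = true) :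
    connIn Adj op S a b → connIn Adj op' S a b := by
  rintro ⟨f, m, h0, hm, hS, hE⟩
  exact ⟨f, m, h0, hm, hS, fun i hi => ⟨(hE i hi).1, h _ (hE i hi).2⟩⟩

lemma connIn_mono_set (h : S ⊆ T) : connIn Adj op S a b → connIn Adj op T a b := by
  rintro ⟨f, m, h0, hm, hS, hE⟩
  exact ⟨f, m, h0, hm, fun i hi => h (hS i hi), hE⟩

lemma connIn_congr (h : ∀ u v, u ∈ S → v ∈ S → op' s(u, v) = op s(u, v)) :
    connIn Adj op S a b → connIn Adj op' S a b := by
  rintro ⟨f, m, h0, hm, hS, hE⟩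
  refine ⟨f, m, h0, hm, hS, fun i hi => ⟨(hE i hi).1, ?_⟩⟩
  rw [h _ _ (hS i hi.le) (hS (i+1) hi)]
  exact (hE i hi).2

lemma connIn_trans : connIn Adj op S a b → connIn Adj op S b c → connIn Adj op S a c := by
  rintro ⟨f, m, hf0, hfm, hfS, hfE⟩ ⟨g, k, hg0, hgk, hgS, hgE⟩
  have key : ∀ j, m ≤ j → (if j ≤ m then f j else g (j - m)) = g (j - m) := by
    intro j hj
    split_ifs with hh
    · have : j = m := le_antisymm hh hj
      subst this
      simp [hfm, ← hg0]
    · rfl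
  refine ⟨fun i => if i ≤ m then f i else g (i - m), m + k, by simp [hf0], ?_, ?_, ?_⟩
  · show (if m + k ≤ m then f (m + k) else g (m + k - m)) = c
    rw [key _ (Nat.le_add_right m k)]
    simpa using hgk
  · intro i hi
    show (if i ≤ m then f i else g (i - m)) ∈ S
    split_ifs with h
    · exact hfS i h
    · exact hgS (i - m) (by omega)
  · intro i hi
    show Adj (if i ≤ m then f i else g (i - m)) (if i + 1 ≤ m then f (i+1) else g (i + 1 - m)) ∧
      op s((if i ≤ m then f i else g (i - m)), (if i + 1 ≤ m then f (i+1) else g (i + 1 - m))) = true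
    rcases le_or_gt (i + 1) m with h | h
    · have h2 : i ≤ m := by omega
      simp only [h2, h, if_true]
      exact hfE i (by omega)
    · have hi1 : m ≤ i := by omega
      rw [key i hi1, key (i + 1) (by omega)]
      have heq : i + 1 - m = (i - m) + 1 := by omega
      rw [heq]
      exact hgE (i - m) (by omega)

lemma connIn_single (hAdj : Adj a b) (hop : op s(a, b) = true) (ha : a ∈ S) (hb : b ∈ S) :
    connIn Adj op S a b := by
  refine ⟨fun i => if i = 0 then a else b, 1, by simp, by simp, ?_, ?_⟩
  · intro i hi
    interval_cases i <;> simp [ha, hb]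
  · intro i hi
    interval_cases i
    simpa using ⟨hAdj, hop⟩

lemma connIn_suffix [DecidableEq (Sym2 V)] (y ty y' ty' : V)
    (ha : a = y ∨ a = ty ∨ a = y' ∨ a = ty')
    (h : connIn Adj op S a x) :
    ∃ w, (w = y ∨ w = ty ∨ w = y' ∨ w = ty') ∧
      connIn Adj
        (Function.update (Function.update op s(y, ty) false) s(y', ty') false) S w x := by
  classical
  obtain ⟨f, m, h0, hm, hS, hE⟩ := h
  set P : ℕ → Prop := fun k => f k = y ∨ f k = ty ∨ f k = y' ∨ f k = ty' with hP
  have hP0 : P 0 := by rw [hP]; simpa [h0] using ha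
  set i := Nat.findGreatest P m with hi
  have hPi : P i := Nat.findGreatest_spec (Nat.zero_le m) hP0
  have him : i ≤ m := Nat.findGreatest_le m
  have hgt : ∀ k, i < k → k ≤ m → ¬ P k := fun k h1 h2 =>
    Nat.findGreatest_is_greatest h1 h2
  refine ⟨f i, hPi, fun j => f (i + j), m - i, rfl, ?_, fun j hj => hS _ (by omega), ?_⟩
  · show f (i + (m - i)) = x
    rw [Nat.add_sub_cancel' him]; exact hm
  intro j hj
  have hlt : i + j < m := by omega
  show Adj (f (i + j)) (f (i + (j + 1))) ∧
    Function.update (Function.update op s(y, ty) false) s(y', ty') false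
      s(f (i + j), f (i + (j + 1))) = true
  have harr : i + (j + 1) = (i + j) + 1 := by omega
  rw [harr]
  refine ⟨(hE _ hlt).1, ?_⟩
  have hnot : ¬ P (i + j + 1) := hgt _ (by omega) (by omega)
  have hne1 : s(f (i + j), f (i + j + 1)) ≠ s(y, ty) := by
    intro hcon
    rw [Sym2.eq_iff] at hcon
    rcases hcon with ⟨_, h2⟩ | ⟨h1, _⟩ <;> exact hnot (by rw [hP]; tauto)
  have hne2 : s(f (i + j), f (i + j + 1)) ≠ s(y', ty') := by
    intro hcon
    rw [Sym2.eq_iff] at hcon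
    rcases hcon with ⟨_, h2⟩ | ⟨h1, _⟩ <;> exact hnot (by rw [hP]; tauto)
  rw [Function.update_of_ne hne2, Function.update_of_ne hne1]
  exact (hE _ hlt).2

end Stmt18Aux

theorem stmt18 (d n : ℕ) (hn : 1 ≤ n) (op : Sym2 (Fin d → ℤ) → Bool)
    (tild : (Fin d → ℤ) → Fin d → ℤ)
    (htild : ∀ y : Fin d → ℤ, ‖y‖ = (n : ℝ) →
      latAdj d y (tild y) ∧ (n : ℝ) < ‖tild y‖)
    (x : Fin d → ℤ) :
    ∀ y y' : Fin d → ℤ, admissiblePair d n op tild x y →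
      admissiblePair d n op tild x y' → y = y' := by
  intro y y' hy hy'
  by_contra hne
  obtain ⟨hyn, _hp1, hp2, hQ, hU⟩ := hy
  obtain ⟨hyn', _hp1', hp2', hQ', hU'⟩ := hy'
  obtain ⟨hadj, hty⟩ := htild y hyn
  obtain ⟨hadj', hty'⟩ := htild y' hyn'
  classical
  set ty := tild y with hty_def
  set ty' := tild y' with hty'_def
  -- the two pivotal edges are distinct
  have hne_e : s(y, ty) ≠ s(y', ty') := by
    intro h
    rw [Sym2.eq_iff] at h
    rcases h with ⟨h1, _⟩ | ⟨_, h2⟩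
    · exact hne h1
    · rw [h2] at hty; rw [hyn'] at hty; exact lt_irrefl _ hty
  -- edges inside the box differ from pivotal edges
  have hQavoid : ∀ (z tz : Fin d → ℤ), (n : ℝ) < ‖tz‖ →
      ∀ u v : Fin d → ℤ, ‖u‖ ≤ (n : ℝ) → ‖v‖ ≤ (n : ℝ) → s(u, v) ≠ s(z, tz) := by
    intro z tz htz u v hu hv h
    rw [Sym2.eq_iff] at h
    rcases h with ⟨_, h2⟩ | ⟨h1, _⟩
    · rw [← h2] at htz; exact absurd hv (not_le.mpr htz)
    · rw [← h1] at htz; exact absurd hu (not_le.mpr htz)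
  -- both pivotal edges are open in `op`
  have hope : op s(y, ty) = true := by
    by_contra h
    have h0 : op s(y, ty) = false := by simpa using h
    apply hp2
    have heq : Function.update op s(y, ty) false = op := by
      rw [← h0]; exact Function.update_eq_self _ _
    rw [heq]
    exact Stmt18Aux.connIn_trans (Stmt18Aux.connIn_mono_set (Set.subset_univ _) hQ) hU
  have hope' : op s(y', ty') = true := by
    by_contra h
    have h0 : op s(y', ty') = false := by simpa using h
    apply hp2'
    have heq : Function.update op s(y', ty') false = op := by
      rw [← h0]; exact Function.update_eq_self _ _
    rw [heq]
    exact Stmt18Aux.connIn_trans (Stmt18Aux.connIn_mono_set (Set.subset_univ _) hQ') hU'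
  -- shorthand for configurations
  set ωe := Function.update op s(y, ty) false with hωe
  set ωe' := Function.update op s(y', ty') false with hωe'
  set ωd := Function.update ωe s(y', ty') false with hωd
  have hmono1 : ∀ s, ωd s = true → ωe s = true := by
    intro s hs
    by_cases h : s = s(y', ty')
    · subst h; rw [hωd, Function.update_self] at hs; exact absurd hs (by simp)
    · rwa [hωd, Function.update_of_ne h] at hs
  have hmono2 : ∀ s, ωd s = true → ωe' s = true := by
    intro s hs
    by_cases h1 : s = s(y', ty')
    · subst h1; rw [hωd, Function.update_self] at hs; exact absurd hs (by simp)
    · rw [hωd, Function.update_of_ne h1] at hs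
      by_cases h2 : s = s(y, ty)
      · subst h2; rw [hωe, Function.update_self] at hs; exact absurd hs (by simp)
      · rw [hωe, Function.update_of_ne h2] at hs
        rw [hωe', Function.update_of_ne h1]
        exact hs
  -- box paths transfer to updated configurations
  have hQtrans : ∀ (z tz : Fin d → ℤ) (b : Bool), (n : ℝ) < ‖tz‖ →
      ∀ w : Fin d → ℤ, connIn (latAdj d) op {z | ‖z‖ ≤ (n : ℝ)} 0 w →
      connIn (latAdj d) (Function.update op s(z, tz) b) Set.univ 0 w := by
    intro z tz b htz w hw
    refine Stmt18Aux.connIn_mono_set (Set.subset_univ _) (Stmt18Aux.connIn_congr ?_ hw)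
    intro u v hu hv
    exact Function.update_of_ne (hQavoid z tz htz u v hu hv) _ _
  have hQy_e : connIn (latAdj d) ωe Set.univ 0 y := hQtrans y ty false hty y hQ
  have hQy_e' : connIn (latAdj d) ωe' Set.univ 0 y := hQtrans y' ty' false hty' y hQ
  have hQy'_e : connIn (latAdj d) ωe Set.univ 0 y' := hQtrans y ty false hty y' hQ'
  have hQy'_e' : connIn (latAdj d) ωe' Set.univ 0 y' := hQtrans y' ty' false hty' y' hQ'
  -- suffix of a path from y' to x after last visit to {y, ty, y', ty'}
  obtain ⟨w, hw, hwx⟩ :=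
    Stmt18Aux.connIn_suffix y ty y' ty' (Or.inr (Or.inr (Or.inl rfl))) hU'
  rcases hw with rfl | rfl | rfl | rfl
  · -- w = y : contradict pivotality of e
    exact hp2 (Stmt18Aux.connIn_trans hQy_e (Stmt18Aux.connIn_mono_op hmono1 hwx))
  · -- w = ty : contradict pivotality of e'
    apply hp2'
    have hedge : ωe' s(y, ty) = true := by
      rw [hωe', Function.update_of_ne hne_e]; exact hope
    have hsingle : connIn (latAdj d) ωe' Set.univ y ty :=
      Stmt18Aux.connIn_single hadj hedge (Set.mem_univ _) (Set.mem_univ _)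
    exact Stmt18Aux.connIn_trans (Stmt18Aux.connIn_trans hQy_e' hsingle)
      (Stmt18Aux.connIn_mono_op hmono2 hwx)
  · -- w = y' : contradict pivotality of e'
    exact hp2' (Stmt18Aux.connIn_trans hQy'_e' (Stmt18Aux.connIn_mono_op hmono2 hwx))
  · -- w = ty' : contradict pivotality of e
    apply hp2
    have hedge : ωe s(y', ty') = true := by
      rw [hωe, Function.update_of_ne (Ne.symm hne_e)]; exact hope'
    have hsingle : connIn (latAdj d) ωe Set.univ y' ty' :=
      Stmt18Aux.connIn_single hadj' hedge (Set.mem_univ _) (Set.mem_univ _)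
    exact Stmt18Aux.connIn_trans (Stmt18Aux.connIn_trans hQy'_e hsingle)
      (Stmt18Aux.connIn_mono_op hmono1 hwx)
end
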